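/- As a corollary of the reachability theorem: for a directed graph index G and query q with distinct distances, greedy beam search with query q, entry point N_{i,q}, and result-list size L ≥ EH(N_{i,q}, N_{j,q}, q, G) always visits N_{j,q}, where EH(u,v,q,G) = min over directed paths p from u to v in G of the maximum rank (with respect to distance to q) of a vertex on p. -/

import Mathlib

attribute [local instance] Classical.propDecidable

/-- The state of greedy beam search (Algorithm 1): the set `C` of unexpanded
candidates, the result set `R`, and the set of visited vertices. -/
structure SState (V : Type*) where
  C : Finset V
  R : Finset V
  visited : Finset V

variable {V : Type*} [Fintype V] [DecidableEq V]

/-- `rank dist x = i` means `x` is the `i`-th nearest vertex to the query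
(with respect to the distance-to-query function `dist`), i.e. `F_{x,q} = i`. -/
noncomputable def rank (dist : V → ℝ) (x : V) : ℕ :=
  (Finset.univ.filter fun y => dist y ≤ dist x).card

/-- Keep only the `L` closest (to the query) elements of `R`. -/
noncomputable def truncate (dist : V → ℝ) (L : ℕ) (R : Finset V) : Finset V :=
  R.filter fun x => (R.filter fun y => dist y ≤ dist x).card ≤ L

/-- An element of `C` closest to the query. -/
noncomputable def argmin (dist : V → ℝ) (C : Finset V) (h : C.Nonempty) : V :=
  (C.exists_min_image dist h).choose

/-- Insertion condition of Algorithm 1: `|R| < L` or `δ(v,q) < d_max`. -/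
def insertCond (dist : V → ℝ) (L : ℕ) (R : Finset V) (v : V) : Prop :=
  R.card < L ∨ ∃ x ∈ R, dist v < dist x

/-- Inner loop of Algorithm 1: process the (unvisited) neighbors of the popped
vertex one by one, inserting them into `C` and `R` and truncating `R` to its
`L` closest elements. -/
noncomputable def insertLoop (dist : V → ℝ) (L : ℕ) : List V → SState V → SState V
  | [], s => s
  | v :: vs, s =>
    insertLoop dist L vs <|
      if v ∈ s.visited then s
      else if insertCond dist L s.R v then
        ⟨insert v s.C, truncate dist L (insert v s.R), insert v s.visited⟩
      else ⟨s.C, s.R, insert v s.visited⟩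

/-- Main loop of Algorithm 1 (greedy beam search) with explicit fuel.
At each step the closest unexpanded candidate `u` is popped; the loop breaks if
`δ(u,q) > d_max` (i.e. every element of the nonempty `R` is strictly closer
than `u`), and otherwise expands `u`. -/
noncomputable def gloop (Adj : V → V → Prop) (dist : V → ℝ) (L : ℕ) :
    ℕ → SState V → SState V
  | 0, s => s
  | n + 1, s =>
    if hC : s.C.Nonempty then
      let u := argmin dist s.C hC
      if s.R.Nonempty ∧ ∀ x ∈ s.R, dist x < dist u then s
      else
        gloop Adj dist L n
          (insertLoop dist L ((Finset.univ.filter fun v => Adj u v).toList)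
            ⟨s.C.erase u, s.R, s.visited⟩)
    else s

/-- Greedy beam search on the graph `Adj` with distance-to-query `dist`,
result-list size `L` and entry point `ep`. -/
noncomputable def search (Adj : V → V → Prop) (dist : V → ℝ) (L : ℕ) (ep : V) : SState V :=
  gloop Adj dist L (Fintype.card V + 1) ⟨{ep}, {ep}, {ep}⟩

/-- Adjacency of `NG_{S,q}`, the subgraph of `Adj` induced by the `S` nearest
vertices to the query. -/
def AdjS (Adj : V → V → Prop) (dist : V → ℝ) (S : ℕ) (a b : V) : Prop :=
  Adj a b ∧ rank dist a ≤ S ∧ rank dist b ≤ S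

/-- `p` is a directed path from `u` to `v` in the graph `Adj`. -/
def IsPathFrom (Adj : V → V → Prop) (u v : V) (p : List V) : Prop :=
  p.head? = some u ∧ p.getLast? = some v ∧ p.Chain' Adj

/-- Escape Hardness `EH(u,v,q,G)`: the minimum, over directed paths `p` from
`u` to `v` in `G`, of the maximum rank (w.r.t. distance to the query) of a
vertex on `p`; it is `⊤` (infinity) if `v` is unreachable from `u`. -/
noncomputable def EH (Adj : V → V → Prop) (rk : V → ℕ) (u v : V) : ℕ∞ :=
  sInf {n : ℕ∞ | ∃ p : List V, IsPathFrom Adj u v p ∧ n = ((p.map rk).foldr max 0 : ℕ)}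


/-!
A path from `u` to `v` witnessing `EH ≤ L` stays among the `L` nearest vertices to the query.
Greedy beam search maintains two facts: a visited vertex of rank `≤ L` is never truncated out of
the result list `R`, and such a vertex, once expanded (visited but no longer a candidate), has all
its neighbours visited. When the search stops, no candidate lies in `R` (the popped candidate is
farther than all of `R`, or there are no candidates left), so every visited vertex of rank `≤ L`
has been expanded; hence the visited set is closed under the edges of `NG_{L,q}` and contains
the whole path.
-/

namespace SState

variable (Adj : V → V → Prop) (dist : V → ℝ) (L : ℕ)

structure Invariant (s : SState V) : Prop where
  R_subset_visited : s.R ⊆ s.visited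
  C_subset_visited : s.C ⊆ s.visited
  mem_R_of_rank_le : ∀ x ∈ s.visited, rank dist x ≤ L → x ∈ s.R

/-- A vertex in `visited \ C` has been expanded or rejected by `insertCond`, and rejected ones
have rank `> L`; so this says that expanded vertices of rank `≤ L` have each neighbour visited
or still `pending`. -/
def Closed (pending : List V) (s : SState V) : Prop :=
  ∀ x ∈ s.visited, rank dist x ≤ L → x ∉ s.C →
    ∀ y, Adj x y → y ∈ s.visited ∨ y ∈ pending

end SState

open SState

section InsertLoop

variable (dist : V → ℝ) (L : ℕ)

theorem lt_rank_of_not_insertCond {R : Finset V} {v : V} (hv : v ∉ R)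
    (h : ¬ insertCond dist L R v) : L < rank dist v := by
  simp only [insertCond, not_or, not_lt, not_exists, not_and] at h
  have hsub : insert v R ⊆ Finset.univ.filter fun y => dist y ≤ dist v := by
    intro x hx
    rcases Finset.mem_insert.mp hx with rfl | hx
    · simp
    · simp [h.2 x hx]
  have hcard := Finset.card_le_card hsub
  rw [Finset.card_insert_of_notMem hv] at hcard
  unfold rank
  omega

omit [DecidableEq V] in
theorem mem_truncate_of_rank_le {R : Finset V} {x : V} (hx : x ∈ R) (h : rank dist x ≤ L) :
    x ∈ truncate dist L R :=
  Finset.mem_filter.mpr ⟨hx, (Finset.card_le_card (Finset.monotone_filter_left _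
    (Finset.subset_univ R))).trans h⟩

noncomputable def insertStep (v : V) (s : SState V) : SState V :=
  if v ∈ s.visited then s
  else if insertCond dist L s.R v then
    ⟨insert v s.C, truncate dist L (insert v s.R), insert v s.visited⟩
  else ⟨s.C, s.R, insert v s.visited⟩

omit [Fintype V] in
theorem insertLoop_cons (v : V) (vs : List V) (s : SState V) :
    insertLoop dist L (v :: vs) s = insertLoop dist L vs (insertStep dist L v s) := rfl

variable {dist L}

omit [Fintype V] in
theorem visited_subset_insertStep (v : V) (s : SState V) :
    s.visited ⊆ (insertStep dist L v s).visited := by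
  unfold insertStep
  split_ifs <;> simp [Finset.subset_insert]

omit [Fintype V] in
theorem mem_insertStep_visited (v : V) (s : SState V) : v ∈ (insertStep dist L v s).visited := by
  unfold insertStep
  split_ifs <;> simp_all

omit [Fintype V] in
theorem mem_sdiff_insertStep {v x : V} {s : SState V} (hx : x ∈ s.visited \ s.C) :
    x ∈ (insertStep dist L v s).visited \ (insertStep dist L v s).C := by
  rw [Finset.mem_sdiff] at hx
  unfold insertStep
  split_ifs with hv
  · simpa using hx
  · have hxv : x ≠ v := by rintro rfl; exact hv hx.1
    simp [hx, hxv]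
  · simp [hx]

theorem SState.Invariant.insertStep {s : SState V} (hs : s.Invariant dist L) (v : V) :
    (insertStep dist L v s).Invariant dist L := by
  unfold _root_.insertStep
  split_ifs with hv hins
  · exact hs
  · refine ⟨?_, Finset.insert_subset_insert v hs.C_subset_visited, fun x hx hxL => ?_⟩
    · exact (Finset.filter_subset _ _).trans (Finset.insert_subset_insert v hs.R_subset_visited)
    · refine mem_truncate_of_rank_le dist L ?_ hxL
      rcases Finset.mem_insert.mp hx with rfl | hx
      · exact Finset.mem_insert_self _ _
      · exact Finset.mem_insert_of_mem (hs.mem_R_of_rank_le x hx hxL)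
  · have hvL := lt_rank_of_not_insertCond dist L (fun h => hv (hs.R_subset_visited h)) hins
    refine ⟨hs.R_subset_visited.trans (Finset.subset_insert _ _),
      hs.C_subset_visited.trans (Finset.subset_insert _ _), fun x hx hxL => ?_⟩
    rcases Finset.mem_insert.mp hx with rfl | hx
    · omega
    · exact hs.mem_R_of_rank_le x hx hxL

/-- The step only visits `v`, and if `rank v ≤ L` it also makes `v` a candidate. -/
theorem mem_sdiff_of_mem_sdiff_insertStep {s : SState V} (hs : s.Invariant dist L) {v x : V}
    (hx : x ∈ (insertStep dist L v s).visited \ (insertStep dist L v s).C)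
    (hxL : rank dist x ≤ L) : x ∈ s.visited \ s.C := by
  rw [Finset.mem_sdiff] at hx ⊢
  unfold insertStep at hx
  split_ifs at hx with hv hins
  · exact hx
  · simp only [Finset.mem_insert, not_or] at hx
    exact ⟨hx.1.resolve_left hx.2.1, hx.2.2⟩
  · have hvL := lt_rank_of_not_insertCond dist L (fun h => hv (hs.R_subset_visited h)) hins
    refine ⟨(Finset.mem_insert.mp hx.1).resolve_left ?_, hx.2⟩
    rintro rfl
    omega

theorem SState.Closed.insertStep (Adj : V → V → Prop) {s : SState V} (hs : s.Invariant dist L)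
    {v : V} {vs : List V} (hc : s.Closed Adj dist L (v :: vs)) :
    (insertStep dist L v s).Closed Adj dist L vs := by
  intro x hx hxL hxC y hxy
  have hx' := mem_sdiff_of_mem_sdiff_insertStep hs (Finset.mem_sdiff.mpr ⟨hx, hxC⟩) hxL
  rw [Finset.mem_sdiff] at hx'
  rcases hc x hx'.1 hxL hx'.2 y hxy with hy | hy
  · exact Or.inl (visited_subset_insertStep v s hy)
  rcases List.mem_cons.mp hy with rfl | hy
  · exact Or.inl (mem_insertStep_visited y s)
  · exact Or.inr hy

omit [Fintype V] in
theorem visited_subset_insertLoop (l : List V) (s : SState V) :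
    s.visited ⊆ (insertLoop dist L l s).visited := by
  induction l generalizing s with
  | nil => exact subset_rfl
  | cons v vs ih =>
    rw [insertLoop_cons]
    exact (visited_subset_insertStep v s).trans (ih _)

omit [Fintype V] in
theorem sdiff_subset_insertLoop (l : List V) (s : SState V) :
    s.visited \ s.C ⊆ (insertLoop dist L l s).visited \ (insertLoop dist L l s).C := by
  induction l generalizing s with
  | nil => exact subset_rfl
  | cons v vs ih =>
    rw [insertLoop_cons]
    exact fun x hx => ih _ (mem_sdiff_insertStep hx)

theorem SState.Invariant.insertLoop {s : SState V} (hs : s.Invariant dist L) (l : List V) :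
    (insertLoop dist L l s).Invariant dist L := by
  induction l generalizing s with
  | nil => exact hs
  | cons v vs ih =>
    rw [insertLoop_cons]
    exact ih (hs.insertStep v)

theorem SState.Closed.insertLoop (Adj : V → V → Prop) {s : SState V} (hs : s.Invariant dist L)
    {l : List V} (hc : s.Closed Adj dist L l) : (insertLoop dist L l s).Closed Adj dist L [] := by
  induction l generalizing s with
  | nil => exact hc
  | cons v vs ih =>
    rw [insertLoop_cons]
    exact ih (hs.insertStep v) (hc.insertStep Adj hs)

end InsertLoop

section Expand

variable (Adj : V → V → Prop) (dist : V → ℝ) (L : ℕ)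

def SState.pop (s : SState V) (u : V) : SState V :=
  ⟨s.C.erase u, s.R, s.visited⟩

noncomputable def expand (s : SState V) (u : V) : SState V :=
  insertLoop dist L (Finset.univ.filter fun v => Adj u v).toList (s.pop u)

variable {Adj dist L}

theorem SState.Invariant.pop {s : SState V} (hs : s.Invariant dist L) (u : V) :
    (s.pop u).Invariant dist L :=
  ⟨hs.R_subset_visited, (s.C.erase_subset u).trans hs.C_subset_visited, hs.mem_R_of_rank_le⟩

theorem SState.Invariant.expand {s : SState V} (hs : s.Invariant dist L) (u : V) :
    (expand Adj dist L s u).Invariant dist L :=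
  (hs.pop u).insertLoop _

theorem SState.Closed.expand {s : SState V} (hs : s.Invariant dist L)
    (hc : s.Closed Adj dist L []) (u : V) : (expand Adj dist L s u).Closed Adj dist L [] := by
  refine SState.Closed.insertLoop Adj (hs.pop u) ?_
  intro x hx hxL hxC y hxy
  by_cases hxu : x = u
  · subst hxu
    simp [hxy]
  · have hxC' : x ∉ s.C := fun h => hxC (Finset.mem_erase.mpr ⟨hxu, h⟩)
    exact .inl ((hc x hx hxL hxC' y hxy).resolve_right (by simp))

theorem visited_subset_expand (s : SState V) (u : V) :
    s.visited ⊆ (expand Adj dist L s u).visited :=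
  visited_subset_insertLoop _ (s.pop u)

theorem card_sdiff_lt_expand {s : SState V} (hs : s.Invariant dist L) {u : V} (hu : u ∈ s.C) :
    (s.visited \ s.C).card <
      ((expand Adj dist L s u).visited \ (expand Adj dist L s u).C).card := by
  have hsub : insert u (s.visited \ s.C) ⊆ (s.pop u).visited \ (s.pop u).C := by
    intro x hx
    rcases Finset.mem_insert.mp hx with rfl | hx
    · exact Finset.mem_sdiff.mpr ⟨hs.C_subset_visited hu, Finset.notMem_erase _ _⟩
    · exact Finset.sdiff_subset_sdiff subset_rfl (s.C.erase_subset u) hx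
  calc (s.visited \ s.C).card < (insert u (s.visited \ s.C)).card :=
        Finset.card_lt_card (Finset.ssubset_insert fun h => (Finset.mem_sdiff.mp h).2 hu)
    _ ≤ _ := Finset.card_le_card (hsub.trans (sdiff_subset_insertLoop _ _))

end Expand

section Gloop

variable {Adj : V → V → Prop} {dist : V → ℝ} {L : ℕ}

omit [Fintype V] [DecidableEq V] in
theorem argmin_mem {C : Finset V} (hC : C.Nonempty) : argmin dist C hC ∈ C :=
  (C.exists_min_image dist hC).choose_spec.1

omit [Fintype V] [DecidableEq V] in
theorem argmin_le {C : Finset V} (hC : C.Nonempty) {w : V} (hw : w ∈ C) :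
    dist (argmin dist C hC) ≤ dist w :=
  (C.exists_min_image dist hC).choose_spec.2 w hw

theorem gloop_induction (P : SState V → Prop)
    (step : ∀ s u, u ∈ s.C → P s → P (expand Adj dist L s u)) (n : ℕ) {s : SState V}
    (hs : P s) : P (gloop Adj dist L n s) := by
  induction n generalizing s with
  | zero => exact hs
  | succ n ih =>
    simp only [gloop]
    split_ifs with hC
    · exact hs
    · exact ih (step s _ (argmin_mem hC) hs)
    · exact hs

/-- The fuel suffices because each expansion moves a vertex into `visited \ C`. -/
theorem disjoint_gloop (n : ℕ) {s : SState V} (hs : s.Invariant dist L)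
    (hn : Fintype.card V ≤ n + (s.visited \ s.C).card) :
    Disjoint (gloop Adj dist L n s).C (gloop Adj dist L n s).R := by
  induction n generalizing s with
  | zero =>
    suffices s.C = ∅ by simp [gloop, this]
    refine Finset.eq_empty_of_forall_notMem fun w hw => ?_
    have := Finset.card_lt_univ_of_notMem (s := s.visited \ s.C)
      fun h => (Finset.mem_sdiff.mp h).2 hw
    omega
  | succ n ih =>
    simp only [gloop]
    split_ifs with hC hstop
    · exact Finset.disjoint_left.mpr fun w hwC hwR =>
        (hstop.2 w hwR).not_ge (argmin_le hC hwC)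
    · have hlt := card_sdiff_lt_expand (Adj := Adj) hs (argmin_mem (dist := dist) hC)
      exact ih (s := expand Adj dist L s _) (hs.expand _) (by omega)
    · simp [Finset.not_nonempty_iff_eq_empty.mp hC]

end Gloop

theorem search_visited_closed_AdjS (Adj : V → V → Prop) (dist : V → ℝ) (L : ℕ) (u : V)
    {x y : V} (hxy : AdjS Adj dist L x y) (hx : x ∈ (search Adj dist L u).visited) :
    y ∈ (search Adj dist L u).visited := by
  have hinit : (⟨{u}, {u}, {u}⟩ : SState V).Invariant dist L ∧
      (⟨{u}, {u}, {u}⟩ : SState V).Closed Adj dist L [] :=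
    ⟨⟨subset_rfl, subset_rfl, fun _ hx _ => hx⟩, fun _ hx _ hxC => absurd hx hxC⟩
  obtain ⟨hs, hc⟩ := gloop_induction (fun s => s.Invariant dist L ∧ s.Closed Adj dist L [])
    (fun _ _ _ h => ⟨h.1.expand _, h.2.expand h.1 _⟩) (Fintype.card V + 1) hinit
  have hdisj := disjoint_gloop (Adj := Adj) (Fintype.card V + 1) hinit.1 (by omega)
  have hxR := hs.mem_R_of_rank_le x hx hxy.2.1
  exact (hc x hx hxy.2.1 (Finset.disjoint_right.mp hdisj hxR) y hxy.1).resolve_right (by simp)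

omit [Fintype V] [DecidableEq V] in
theorem exists_path_rank_le_of_EH_le {Adj : V → V → Prop} {rk : V → ℕ} {u v : V} {L : ℕ}
    (h : EH Adj rk u v ≤ L) : ∃ p, IsPathFrom Adj u v p ∧ ∀ x ∈ p, rk x ≤ L := by
  obtain ⟨_, ⟨p, hp, rfl⟩, hlt⟩ :=
    sInf_lt_iff.mp (h.trans_lt (ENat.natCast_lt_natCast.mpr (Nat.lt_succ_self L)))
  have hmax : (p.map rk).foldr max 0 ≤ L := Nat.lt_succ_iff.mp (by exact_mod_cast hlt)
  exact ⟨p, hp, fun x hx => (List.le_max_of_le' 0 (List.mem_map_of_mem hx) le_rfl).trans hmax⟩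

theorem greedy_search_visits_of_EH_le_general
    (Adj : V → V → Prop) (dist : V → ℝ)
    (L : ℕ) (u v : V)
    (hEH : EH Adj (rank dist) u v ≤ (L : ℕ∞)) :
    v ∈ (search Adj dist L u).visited := by
  obtain ⟨p, ⟨hhead, hlast, hchain⟩, hrank⟩ := exists_path_rank_le_of_EH_le hEH
  obtain ⟨ps, rfl⟩ := List.head?_eq_some_iff.mp hhead
  have hu : u ∈ (search Adj dist L u).visited :=
    gloop_induction (fun s => u ∈ s.visited) (fun s w _ h => visited_subset_expand s w h) _
      (Finset.mem_singleton_self u)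
  have hpath : (u :: ps).IsChain (AdjS Adj dist L) :=
    hchain.imp_of_mem_imp fun a b ha hb hab => ⟨hab, hrank a ha, hrank b hb⟩
  exact hpath.induction (· ∈ (search Adj dist L u).visited) _
    (fun _ _ hxy hx => search_visited_closed_AdjS Adj dist L u hxy hx) (fun _ => hu) v
    (List.mem_of_mem_getLast? hlast)

/-- Greedy beam search with query `q`, entry point `N_{i,q}`
and result-list size `L ≥ EH(N_{i,q}, N_{j,q}, q, G)` always visits `N_{j,q}`. -/
theorem greedy_search_visits_of_EH_le
    (Adj : V → V → Prop) (dist : V → ℝ) (hinj : Function.Injective dist)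
    (L : ℕ) (u v : V)
    (hEH : EH Adj (rank dist) u v ≤ (L : ℕ∞)) :
    v ∈ (search Adj dist L u).visited :=
  greedy_search_visits_of_EH_le_general Adj dist L u v hEH
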